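/- For every Ω ∈ H_2, one has θ₀(Ω/2)² = θ₀(Ω)² + θ₄(Ω)² + θ₈(Ω)² + θ₁₂(Ω)². -/

import Mathlib

open Matrix

/-- The Siegel upper half-space: symmetric complex `g × g` matrices with positive
definite imaginary part. -/
def SiegelUpperHalf (g : ℕ) : Set (Matrix (Fin g) (Fin g) ℂ) :=
  {Ω | Ω.IsSymm ∧ (Matrix.of fun i j => (Ω i j).im).PosDef}

/-- The general term of the theta series with characteristic `(a, b)`. -/
noncomputable def thetaTerm (g : ℕ) (a b : Fin g → ℚ) (z : Fin g → ℂ)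
    (Ω : Matrix (Fin g) (Fin g) ℂ) (n : Fin g → ℤ) : ℂ :=
  Complex.exp (Real.pi * Complex.I *
      ((fun i => (n i : ℂ) + (a i : ℂ)) ⬝ᵥ Ω.mulVec (fun i => (n i : ℂ) + (a i : ℂ)))
    + 2 * Real.pi * Complex.I *
      ((fun i => (n i : ℂ) + (a i : ℂ)) ⬝ᵥ (fun i => z i + (b i : ℂ))))

/-- The theta function with characteristic `(a, b)`. -/
noncomputable def theta (g : ℕ) (a b : Fin g → ℚ) (z : Fin g → ℂ)
    (Ω : Matrix (Fin g) (Fin g) ℂ) : ℂ :=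
  ∑' n : Fin g → ℤ, thetaTerm g a b z Ω n

/-- The genus-2 theta constant `θ_k` with `k = b₀ + 2b₁ + 4a₀ + 8a₁`,
i.e. `θ[a/2; b/2](0, Ω)` for `a, b ∈ {0,1}²`. -/
noncomputable def thetaConst (k : ℕ) (Ω : Matrix (Fin 2) (Fin 2) ℂ) : ℂ :=
  theta 2 ![((k / 4 % 2 : ℕ) : ℚ) / 2, ((k / 8 % 2 : ℕ) : ℚ) / 2]
          ![((k % 2 : ℕ) : ℚ) / 2, ((k / 2 % 2 : ℕ) : ℚ) / 2] 0 Ω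

/-!
Expand `θ(Ω/2)²` as a double sum over `(m, n) ∈ ℤ^g × ℤ^g` and substitute `m = p + q + a`,
`n = p - q`, where `a ∈ {0,1}^g` is the parity of `m + n`. By the parallelogram law for the
quadratic form of `Ω`, the exponent `(mᵀΩm + nᵀΩn)/2` becomes
`(p + a/2)ᵀΩ(p + a/2) + (q + a/2)ᵀΩ(q + a/2)`, so the double sum splits as `∑ₐ θ[a/2; 0](Ω)²`.
The rearrangement is justified by absolute convergence: `Im Ω ≥ c • 1` for some `c > 0`, so the
terms are dominated by a product of one-dimensional Gaussians.
-/

open Complex Real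

theorem summable_fin_pi_prod_of_nonneg {β : Type*} :
    ∀ {g : ℕ} {f : Fin g → β → ℝ}, (∀ i b, 0 ≤ f i b) → (∀ i, Summable (f i)) →
      Summable fun n : Fin g → β => ∏ i, f i (n i)
  | 0, _, _, _ => .of_finite
  | g + 1, f, hf₀, hf => by
    have htail := summable_fin_pi_prod_of_nonneg (fun i => hf₀ i.succ) (fun i => hf i.succ)
    have := (hf 0).mul_of_nonneg htail (hf₀ 0) fun _ => Finset.prod_nonneg fun _ _ => hf₀ _ _
    refine (Fin.consEquiv fun _ => β).summable_iff.1 ?_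
    simpa [Function.comp_def, Fin.prod_univ_succ] using this

theorem summable_exp_neg_mul_int_add_sq {c : ℝ} (hc : 0 < c) (a : ℝ) :
    Summable fun m : ℤ => Real.exp (-π * (c * ((m : ℝ) + a) ^ 2)) := by
  have h := summable_pow_mul_jacobiTheta₂_term_bound (c * |a|) hc 0
  simp only [pow_zero, one_mul] at h
  refine h.of_nonneg_of_le (fun _ => (Real.exp_pos _).le) fun m => ?_
  rw [Real.exp_le_exp, Int.cast_abs]
  have hcross : -(|a| * |(m : ℝ)|) ≤ a * m := by
    rw [← abs_mul]; exact neg_abs_le _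
  have hlower : c * (m : ℝ) ^ 2 - 2 * (c * |a|) * |(m : ℝ)| ≤ c * ((m : ℝ) + a) ^ 2 := by
    nlinarith [mul_nonneg hc.le (sq_nonneg a)]
  nlinarith [mul_le_mul_of_nonneg_left hlower Real.pi_pos.le]

theorem summable_exp_neg_mul_dotProduct_self {g : ℕ} {c : ℝ} (hc : 0 < c) (a : Fin g → ℝ) :
    Summable fun n : Fin g → ℤ =>
      Real.exp (-π * (c * ((fun i => (n i : ℝ) + a i) ⬝ᵥ fun i => (n i : ℝ) + a i))) := by
  refine (summable_fin_pi_prod_of_nonneg (fun _ _ => (Real.exp_pos _).le)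
    fun i => summable_exp_neg_mul_int_add_sq hc (a i)).congr fun n => ?_
  simp only [dotProduct, Finset.mul_sum, ← Real.exp_sum, sq]

theorem tsum_sq_eq_tsum_mul_of_summable_norm {ι R : Type*} [NormedRing R] [CompleteSpace R]
    {f : ι → R} (hf : Summable fun i => ‖f i‖) :
    (∑' i, f i) ^ 2 = ∑' x : ι × ι, f x.1 * f x.2 := by
  rw [sq, tsum_mul_tsum_of_summable_norm hf hf]

open scoped MatrixOrder in
theorem Matrix.PosDef.exists_pos_mul_dotProduct_self_le {n : Type*} [Fintype n] [DecidableEq n]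
    {Y : Matrix n n ℝ} (hY : Y.PosDef) : ∃ c > 0, ∀ x : n → ℝ, c * (x ⬝ᵥ x) ≤ x ⬝ᵥ Y *ᵥ x := by
  cases isEmpty_or_nonempty n
  · exact ⟨1, one_pos, fun x => by simp [dotProduct]⟩
  have hY' : IsStrictlyPositive Y := hY.isStrictlyPositive
  obtain ⟨c, hc, hcY⟩ := (CFC.exists_pos_algebraMap_le_iff hY'.isSelfAdjoint).2
    fun _ hx => hY'.spectrum_pos hx
  refine ⟨c, hc, fun x => ?_⟩
  have := (Matrix.le_iff.1 hcY).dotProduct_mulVec_nonneg x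
  simp only [sub_mulVec, dotProduct_sub, Algebra.algebraMap_eq_smul_one, smul_mulVec, one_mulVec,
    dotProduct_smul, smul_eq_mul, star_trivial] at this
  linarith

theorem Matrix.parallelogram_law_dotProduct_mulVec {n R : Type*} [Fintype n]
    [CommRing R] (M : Matrix n n R) (u w : n → R) :
    (u + w) ⬝ᵥ M *ᵥ (u + w) + (u - w) ⬝ᵥ M *ᵥ (u - w) = 2 * (u ⬝ᵥ M *ᵥ u + w ⬝ᵥ M *ᵥ w) := by
  simp only [mulVec_add, mulVec_sub, add_dotProduct, sub_dotProduct, dotProduct_add,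
    dotProduct_sub]
  ring

def parallelogramEquiv : Fin 2 × ℤ × ℤ ≃ ℤ × ℤ where
  toFun x := (x.2.1 + x.2.2 + x.1, x.2.1 - x.2.2)
  invFun y := (⟨((y.1 + y.2) % 2).toNat, by omega⟩, (y.1 + y.2) / 2, (y.1 + y.2) / 2 - y.2)
  left_inv := by
    rintro ⟨⟨a, ha⟩, p, q⟩
    simp only [Prod.mk.injEq, Fin.mk.injEq]
    omega
  right_inv := by
    rintro ⟨m, n⟩
    simp only [Prod.mk.injEq]
    omega

def piParallelogramEquiv (ι : Type*) :
    (ι → Fin 2) × (ι → ℤ) × (ι → ℤ) ≃ (ι → ℤ) × (ι → ℤ) :=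
  ((Equiv.refl _).prodCongr (Equiv.arrowProdEquivProdArrow _ _ _).symm).trans <|
    (Equiv.arrowProdEquivProdArrow _ _ _).symm.trans <|
      (Equiv.piCongrRight fun _ => parallelogramEquiv).trans (Equiv.arrowProdEquivProdArrow _ _ _)

section Theta

variable {g : ℕ}

theorem ofReal_smul_mem_siegelUpperHalf {Ω : Matrix (Fin g) (Fin g) ℂ} (hΩ : Ω ∈ SiegelUpperHalf g)
    {t : ℝ} (ht : 0 < t) : (t : ℂ) • Ω ∈ SiegelUpperHalf g := by
  refine ⟨hΩ.1.smul _, ?_⟩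
  convert hΩ.2.smul ht using 1
  ext i j
  simp

theorem norm_thetaTerm_zero (a b : Fin g → ℚ) (Ω : Matrix (Fin g) (Fin g) ℂ) (n : Fin g → ℤ) :
    ‖thetaTerm g a b 0 Ω n‖ = Real.exp (-π * ((fun i => (n i : ℝ) + a i) ⬝ᵥ
      (Matrix.of fun i j => (Ω i j).im) *ᵥ fun i => (n i : ℝ) + a i)) := by
  rw [thetaTerm, Complex.norm_exp]
  congr 1
  simp [dotProduct, mulVec, Finset.mul_sum, Complex.re_sum, mul_comm, mul_left_comm]

theorem summable_norm_thetaTerm_zero {Ω : Matrix (Fin g) (Fin g) ℂ} (hΩ : Ω ∈ SiegelUpperHalf g)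
    (a b : Fin g → ℚ) : Summable fun n => ‖thetaTerm g a b 0 Ω n‖ := by
  obtain ⟨c, hc, hcY⟩ := hΩ.2.exists_pos_mul_dotProduct_self_le
  refine (summable_exp_neg_mul_dotProduct_self hc fun i => (a i : ℝ)).of_nonneg_of_le
    (fun _ => norm_nonneg _) fun n => ?_
  rw [norm_thetaTerm_zero, Real.exp_le_exp]
  nlinarith [hcY fun i => (n i : ℝ) + a i, Real.pi_pos]

theorem thetaTerm_zero_zero (a : Fin g → ℚ) (Ω : Matrix (Fin g) (Fin g) ℂ) (n : Fin g → ℤ) :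
    thetaTerm g a 0 0 Ω n = cexp (π * I * ((fun i => (n i : ℂ) + a i) ⬝ᵥ
      Ω *ᵥ fun i => (n i : ℂ) + a i)) := by
  simp [thetaTerm, dotProduct]

theorem thetaTerm_half_mul_thetaTerm_half (Ω : Matrix (Fin g) (Fin g) ℂ) (a : Fin g → Fin 2)
    (p q : Fin g → ℤ) :
    thetaTerm g (fun i => ((a i : ℕ) : ℚ) / 2) 0 0 Ω p *
        thetaTerm g (fun i => ((a i : ℕ) : ℚ) / 2) 0 0 Ω q =
      thetaTerm g 0 0 0 ((2 : ℂ)⁻¹ • Ω) (fun i => p i + q i + a i) *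
        thetaTerm g 0 0 0 ((2 : ℂ)⁻¹ • Ω) (p - q) := by
  simp only [thetaTerm_zero_zero, ← Complex.exp_add, smul_mulVec, dotProduct_smul, smul_eq_mul]
  set u : Fin g → ℂ := fun i => (p i : ℂ) + (((a i : ℕ) : ℚ) / 2 : ℚ)
  set w : Fin g → ℂ := fun i => (q i : ℂ) + (((a i : ℕ) : ℚ) / 2 : ℚ)
  have hsum : (fun i => ((p i + q i + a i : ℤ) : ℂ) + ((0 : Fin g → ℚ) i : ℂ)) = u + w := by
    ext i; simp only [u, w, Pi.add_apply, Pi.zero_apply, Rat.cast_zero]; push_cast; ring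
  have hdiff : (fun i => (((p - q) i : ℤ) : ℂ) + ((0 : Fin g → ℚ) i : ℂ)) = u - w := by
    ext i; simp only [u, w, Pi.sub_apply, Pi.zero_apply, Rat.cast_zero]; push_cast; ring
  rw [hsum, hdiff]
  congr 1
  linear_combination (-(π * I) / 2) * parallelogram_law_dotProduct_mulVec Ω u w

theorem theta_zero_inv_two_smul_sq {Ω : Matrix (Fin g) (Fin g) ℂ} (hΩ : Ω ∈ SiegelUpperHalf g) :
    theta g 0 0 0 ((2 : ℂ)⁻¹ • Ω) ^ 2 =
      ∑ a : Fin g → Fin 2, theta g (fun i => ((a i : ℕ) : ℚ) / 2) 0 0 Ω ^ 2 := by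
  have hF : Summable fun n => ‖thetaTerm g 0 0 0 ((2 : ℂ)⁻¹ • Ω) n‖ := by
    have h := ofReal_smul_mem_siegelUpperHalf hΩ (inv_pos.2 (two_pos : (0 : ℝ) < 2))
    push_cast at h
    exact summable_norm_thetaTerm_zero h 0 0
  have hterm : ∀ y : (Fin g → Fin 2) × (Fin g → ℤ) × (Fin g → ℤ),
      thetaTerm g 0 0 0 ((2 : ℂ)⁻¹ • Ω) (piParallelogramEquiv _ y).1 *
          thetaTerm g 0 0 0 ((2 : ℂ)⁻¹ • Ω) (piParallelogramEquiv _ y).2 =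
        thetaTerm g (fun i => ((y.1 i : ℕ) : ℚ) / 2) 0 0 Ω y.2.1 *
          thetaTerm g (fun i => ((y.1 i : ℕ) : ℚ) / 2) 0 0 Ω y.2.2 := fun y =>
    (thetaTerm_half_mul_thetaTerm_half Ω y.1 y.2.1 y.2.2).symm
  have hsum := ((piParallelogramEquiv _).summable_iff.2
    (summable_mul_of_summable_norm hF hF)).congr hterm
  simp only [theta]
  rw [tsum_sq_eq_tsum_mul_of_summable_norm hF, ← (piParallelogramEquiv _).tsum_eq,
    tsum_congr hterm, hsum.tsum_prod, tsum_fintype]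
  refine Finset.sum_congr rfl fun a _ => ?_
  exact (tsum_sq_eq_tsum_mul_of_summable_norm (summable_norm_thetaTerm_zero hΩ
    (fun i => ((a i : ℕ) : ℚ) / 2) 0)).symm

end Theta

theorem theta_two_half_eq_thetaConst (Ω : Matrix (Fin 2) (Fin 2) ℂ) (a : Fin 2 → Fin 2) :
    theta 2 (fun i => ((a i : ℕ) : ℚ) / 2) 0 0 Ω = thetaConst (4 * a 0 + 8 * a 1) Ω := by
  have h0 := (a 0).isLt
  have h1 := (a 1).isLt
  rw [thetaConst, show (4 * a 0 + 8 * a 1 : ℕ) / 4 % 2 = a 0 by omega,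
    show (4 * a 0 + 8 * a 1 : ℕ) / 8 % 2 = a 1 by omega,
    show (4 * a 0 + 8 * a 1 : ℕ) % 2 = 0 by omega,
    show (4 * a 0 + 8 * a 1 : ℕ) / 2 % 2 = 0 by omega]
  congr 1 <;> ext i <;> fin_cases i <;> simp

theorem thetaConst_zero (Ω : Matrix (Fin 2) (Fin 2) ℂ) : thetaConst 0 Ω = theta 2 0 0 0 Ω := by
  simpa [← Pi.zero_def] using (theta_two_half_eq_thetaConst Ω 0).symm

theorem Fintype.sum_fin_two_to_fin_two {M : Type*} [AddCommMonoid M] (f : (Fin 2 → Fin 2) → M) :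
    ∑ a, f a = f ![0, 0] + f ![1, 0] + f ![0, 1] + f ![1, 1] := by
  rw [← (piFinTwoEquiv fun _ => Fin 2).symm.sum_comp]
  simp [Fintype.sum_prod_type, Fin.sum_univ_two]
  abel

/-- `θ₀(Ω/2)² = θ₀(Ω)² + θ₄(Ω)² + θ₈(Ω)² + θ₁₂(Ω)²` for every `Ω` in `H₂`. -/
theorem theta0_half_sq (Ω : Matrix (Fin 2) (Fin 2) ℂ)
    (hΩ : Ω ∈ SiegelUpperHalf 2) :
    thetaConst 0 ((2 : ℂ)⁻¹ • Ω) ^ 2 =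
      thetaConst 0 Ω ^ 2 + thetaConst 4 Ω ^ 2 + thetaConst 8 Ω ^ 2 +
        thetaConst 12 Ω ^ 2 := by
  rw [thetaConst_zero, theta_zero_inv_two_smul_sq hΩ, Fintype.sum_fin_two_to_fin_two]
  simp [theta_two_half_eq_thetaConst]
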